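/- Fix a dyadic cube Q_0 ⊆ ℝ^r, a finite index set E, exponents d_e ≥ 1, and nonnegative locally integrable functions F_e on ℝ^r. Set M = log₂(2|E|)/min_{e∈E} d_e and define for each e ∈ E the family ℐ_{Q_0}^e of dyadic subcubes Q ⊆ Q_0 with [F_e^{d_e}]_Q^{1/d_e} > 2^M [F_e^{d_e}]_{Q_0}^{1/d_e}. Let ℳ_{Q_0}^e be the maximal cubes of ∪_{e'} ℐ_{Q_0}^{e'} that lie in ℐ_{Q_0}^e. Then ∑_{Q∈ℳ_{Q_0}^e} |Q| ≤ |Q_0|/(2|E|) for each e, and hence the union ℳ_{Q_0} of all maximal cubes satisfies ∑_{Q∈ℳ_{Q_0}} |Q| ≤ |Q_0|/2. -/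

import Mathlib

/-!
Two dyadic cubes that meet are nested, so the maximal cubes of any family are pairwise
disjoint. A cube `Q ∈ ℐ^e` has `[F_e^{d_e}]_Q > 2^{M d_e} [F_e^{d_e}]_{Q_0} ≥ 2|E| [F_e^{d_e}]_{Q_0}`
because `M d_e ≥ M min d = log₂(2|E|)`; summing `|Q| [F_e^{d_e}]_Q = ∫_Q F_e^{d_e}` over disjoint
such cubes and comparing with `∫_{Q_0} F_e^{d_e}` bounds their total volume by `|Q_0|/(2|E|)`.
Every maximal cube lies in some `ℐ^e`, so summing over `e` gives `|Q_0|/2`.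
-/

open MeasureTheory

/-- A dyadic cube `∏_{i=1}^r [2^k l_i, 2^k (l_i + 1))` in `ℝ^r`. -/
structure DyadicCube (r : ℕ) where
  k : ℤ
  l : Fin r → ℤ
deriving DecidableEq

namespace DyadicCube

/-- The subset of `ℝ^r` represented by a dyadic cube. -/
def toSet {r : ℕ} (Q : DyadicCube r) : Set (Fin r → ℝ) :=
  Set.univ.pi fun i => Set.Ico ((2 : ℝ) ^ Q.k * Q.l i) ((2 : ℝ) ^ Q.k * (Q.l i + 1))

/-- The Lebesgue measure `|Q| = (2^k)^r` of a dyadic cube. -/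
noncomputable def vol {r : ℕ} (Q : DyadicCube r) : ℝ := ((2 : ℝ) ^ Q.k) ^ r

/-- Inclusion of dyadic cubes. -/
def sub {r : ℕ} (Q Q' : DyadicCube r) : Prop := Q.toSet ⊆ Q'.toSet

/-- The dyadic parent of a dyadic cube. -/
def parent {r : ℕ} (Q : DyadicCube r) : DyadicCube r :=
  ⟨Q.k + 1, fun i => Int.fdiv (Q.l i) 2⟩

/-- The `2^r` dyadic children of a dyadic cube, indexed by `ε : Fin r → Bool`. -/
def child {r : ℕ} (Q : DyadicCube r) (ε : Fin r → Bool) : DyadicCube r :=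
  ⟨Q.k - 1, fun i => 2 * Q.l i + (if ε i then 1 else 0)⟩

/-- The leaves of a finite tree `T` of dyadic cubes: cubes not in `T` whose parent is in `T`. -/
def leaves {r : ℕ} (T : Finset (DyadicCube r)) : Finset (DyadicCube r) :=
  (T.biUnion fun Q => Finset.univ.image Q.child).filter fun Q' => Q' ∉ T

end DyadicCube

lemma Set.Ico_mul_int_subset_of_mem {c x : ℝ} (hc : 0 < c) {l a b : ℤ}
    (hl : x ∈ Set.Ico (c * l) (c * (l + 1))) (hab : x ∈ Set.Ico (c * a) (c * b)) :
    Set.Ico (c * l) (c * (l + 1)) ⊆ Set.Ico (c * a) (c * b) := by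
  have hal : (a : ℝ) ≤ l := by
    have : (a : ℝ) < l + 1 := (mul_lt_mul_iff_right₀ hc).mp (hab.1.trans_lt hl.2)
    exact_mod_cast Int.lt_add_one_iff.mp (by exact_mod_cast this)
  have hlb : (l : ℝ) + 1 ≤ b := by
    have : (l : ℝ) < b := (mul_lt_mul_iff_right₀ hc).mp (hl.1.trans_lt hab.2)
    exact_mod_cast Int.add_one_le_iff.mpr (by exact_mod_cast this)
  exact Set.Ico_subset_Ico (by gcongr) (by gcongr)

lemma MeasureTheory.sum_setIntegral_le_setIntegral {α ι : Type*} [MeasurableSpace α]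
    {μ : Measure α} {g : α → ℝ} {t : Set α} {s : ι → Set α} {S : Finset ι}
    (hs : ∀ i ∈ S, MeasurableSet (s i)) (hdisj : (S : Set ι).PairwiseDisjoint s)
    (hst : ∀ i ∈ S, s i ⊆ t) (hg : IntegrableOn g t μ) (hg0 : 0 ≤ᵐ[μ.restrict t] g) :
    ∑ i ∈ S, ∫ x in s i, g x ∂μ ≤ ∫ x in t, g x ∂μ := by
  rw [← integral_biUnion_finset S hs hdisj fun i hi => hg.mono_set (hst i hi)]
  exact setIntegral_mono_set hg hg0 (Set.iUnion₂_subset hst).eventuallyLE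

lemma Finset.sum_le_sum_sum_filter_of_cover {ι κ : Type*} {s : Finset ι} {t : Finset κ}
    {f : ι → ℝ} (hf : ∀ i ∈ s, 0 ≤ f i) {p : κ → ι → Prop} [∀ k, DecidablePred (p k)]
    (hcover : ∀ i ∈ s, ∃ k ∈ t, p k i) :
    ∑ i ∈ s, f i ≤ ∑ k ∈ t, ∑ i ∈ s with p k i, f i := by
  simp_rw [Finset.sum_filter]
  rw [Finset.sum_comm]
  refine Finset.sum_le_sum fun i hi => ?_
  obtain ⟨k, hk, hpk⟩ := hcover i hi
  calc f i = if p k i then f i else 0 := (if_pos hpk).symm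
    _ ≤ ∑ k ∈ t, if p k i then f i else 0 :=
      Finset.single_le_sum (f := fun k => if p k i then f i else 0)
        (fun k _ => by split_ifs <;> simp [hf i hi]) hk

lemma Real.rpow_mul_lt_of_mul_rpow_inv_lt {t a b p : ℝ} (ht : 0 ≤ t) (ha : 0 ≤ a)
    (hb : 0 ≤ b) (hp : 0 < p) (h : t * a ^ p⁻¹ < b ^ p⁻¹) : t ^ p * a < b := by
  have h' := Real.rpow_lt_rpow (by positivity) h hp
  rwa [Real.mul_rpow ht (by positivity), Real.rpow_inv_rpow ha hp.ne',
    Real.rpow_inv_rpow hb hp.ne'] at h'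

lemma Real.le_rpow_logb_div_mul {b x δ t : ℝ} (hb : 1 < b) (hx : 1 ≤ x) (hδ : 0 < δ)
    (hδt : δ ≤ t) : x ≤ b ^ (Real.logb b x / δ * t) :=
  calc x = b ^ Real.logb b x := (Real.rpow_logb (by linarith) hb.ne' (by linarith)).symm
    _ ≤ b ^ (Real.logb b x / δ * t) := by
      refine Real.rpow_le_rpow_of_exponent_le hb.le ?_
      calc Real.logb b x = Real.logb b x / δ * δ := by field_simp
        _ ≤ Real.logb b x / δ * t := by
          gcongr
          exact div_nonneg (Real.logb_nonneg hb hx) hδ.le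

namespace DyadicCube

variable {r : ℕ}

lemma vol_pos (Q : DyadicCube r) : 0 < Q.vol := by
  unfold vol; positivity

lemma measurableSet_toSet (Q : DyadicCube r) : MeasurableSet Q.toSet :=
  MeasurableSet.univ_pi fun _ => measurableSet_Ico

lemma sub_of_k_le_of_mem {Q Q' : DyadicCube r} (hk : Q.k ≤ Q'.k) {x : Fin r → ℝ}
    (hx : x ∈ Q.toSet) (hx' : x ∈ Q'.toSet) : Q.sub Q' := by
  obtain ⟨m, hm⟩ : ∃ m : ℕ, Q'.k = Q.k + m := ⟨(Q'.k - Q.k).toNat, by omega⟩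
  have hscale : ∀ i, Set.Ico ((2 : ℝ) ^ Q'.k * Q'.l i) ((2 : ℝ) ^ Q'.k * (Q'.l i + 1)) =
      Set.Ico ((2 : ℝ) ^ Q.k * ((2 ^ m * Q'.l i : ℤ) : ℝ))
        ((2 : ℝ) ^ Q.k * ((2 ^ m * (Q'.l i + 1) : ℤ) : ℝ)) := by
    intro i
    rw [hm, zpow_add₀ two_ne_zero, zpow_natCast]
    push_cast
    ring_nf
  refine Set.pi_mono fun i _ => ?_
  have hxi := hx' i (Set.mem_univ i)
  dsimp only at hxi
  rw [hscale] at hxi ⊢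
  exact Set.Ico_mul_int_subset_of_mem (by positivity) (hx i (Set.mem_univ i)) hxi

lemma sub_or_sub_of_not_disjoint {Q Q' : DyadicCube r} (h : ¬ Disjoint Q.toSet Q'.toSet) :
    Q.sub Q' ∨ Q'.sub Q := by
  obtain ⟨x, hx, hx'⟩ := Set.not_disjoint_iff.mp h
  rcases le_total Q.k Q'.k with hk | hk
  · exact Or.inl (sub_of_k_le_of_mem hk hx hx')
  · exact Or.inr (sub_of_k_le_of_mem hk hx' hx)

def IsMaximalIn (J : Set (DyadicCube r)) (Q : DyadicCube r) : Prop :=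
  Q ∈ J ∧ ∀ Q' ∈ J, Q.sub Q' → Q = Q'

lemma pairwiseDisjoint_of_isMaximalIn {J S : Set (DyadicCube r)}
    (hS : ∀ Q ∈ S, IsMaximalIn J Q) : S.PairwiseDisjoint toSet := by
  intro Q hQ Q' hQ' hne
  by_contra hmeet
  rcases sub_or_sub_of_not_disjoint hmeet with h | h
  · exact hne ((hS Q hQ).2 Q' (hS Q' hQ').1 h)
  · exact hne ((hS Q' hQ').2 Q (hS Q hQ).1 h).symm

noncomputable def avg (g : (Fin r → ℝ) → ℝ) (Q : DyadicCube r) : ℝ :=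
  Q.vol⁻¹ * ∫ x in Q.toSet, g x

lemma avg_nonneg {g : (Fin r → ℝ) → ℝ} (hg : ∀ x, 0 ≤ g x) (Q : DyadicCube r) :
    0 ≤ Q.avg g :=
  mul_nonneg (inv_nonneg.mpr (vol_pos Q).le) (setIntegral_nonneg (measurableSet_toSet Q)
    fun x _ => hg x)

lemma vol_mul_avg (g : (Fin r → ℝ) → ℝ) (Q : DyadicCube r) :
    Q.vol * Q.avg g = ∫ x in Q.toSet, g x := by
  rw [avg, mul_inv_cancel_left₀ (vol_pos Q).ne']

lemma mul_sum_vol_le_of_lt_avg {g : (Fin r → ℝ) → ℝ} {Q0 : DyadicCube r}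
    {S : Finset (DyadicCube r)} {c : ℝ} (hg : IntegrableOn g Q0.toSet) (hg0 : ∀ x, 0 ≤ g x)
    (hsub : ∀ Q ∈ S, Q.sub Q0) (hdisj : (S : Set (DyadicCube r)).PairwiseDisjoint toSet)
    (hlt : ∀ Q ∈ S, c * Q0.avg g < Q.avg g) :
    c * ∑ Q ∈ S, Q.vol ≤ Q0.vol := by
  rcases S.eq_empty_or_nonempty with rfl | hne
  · simpa using (vol_pos Q0).le
  have hpacking : Q0.avg g * (c * ∑ Q ∈ S, Q.vol) < Q0.avg g * Q0.vol :=
    calc Q0.avg g * (c * ∑ Q ∈ S, Q.vol) = ∑ Q ∈ S, Q.vol * (c * Q0.avg g) := by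
          rw [Finset.mul_sum, Finset.mul_sum]
          exact Finset.sum_congr rfl fun Q _ => by ring
      _ < ∑ Q ∈ S, Q.vol * Q.avg g :=
          Finset.sum_lt_sum_of_nonempty hne fun Q hQ =>
            mul_lt_mul_of_pos_left (hlt Q hQ) (vol_pos Q)
      _ = ∑ Q ∈ S, ∫ x in Q.toSet, g x := Finset.sum_congr rfl fun Q _ => vol_mul_avg g Q
      _ ≤ ∫ x in Q0.toSet, g x :=
          sum_setIntegral_le_setIntegral (fun Q _ => measurableSet_toSet Q) hdisj hsub hg
            (Filter.Eventually.of_forall hg0)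
      _ = Q0.avg g * Q0.vol := by rw [mul_comm, vol_mul_avg]
  exact (lt_of_mul_lt_mul_left hpacking (avg_nonneg hg0 Q0)).le

lemma sum_vol_le_div_of_mul_rpow_avg_lt {g : (Fin r → ℝ) → ℝ} {Q0 : DyadicCube r}
    {S : Finset (DyadicCube r)} {p t K : ℝ} (hg : IntegrableOn g Q0.toSet) (hg0 : ∀ x, 0 ≤ g x)
    (hsub : ∀ Q ∈ S, Q.sub Q0) (hdisj : (S : Set (DyadicCube r)).PairwiseDisjoint toSet)
    (hp : 0 < p) (ht : 0 ≤ t) (hK : 0 < K) (hKt : K ≤ t ^ p)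
    (hlt : ∀ Q ∈ S, t * Q0.avg g ^ p⁻¹ < Q.avg g ^ p⁻¹) :
    ∑ Q ∈ S, Q.vol ≤ Q0.vol / K := by
  have hpack := mul_sum_vol_le_of_lt_avg hg hg0 hsub hdisj fun Q hQ =>
    Real.rpow_mul_lt_of_mul_rpow_inv_lt ht (avg_nonneg hg0 Q0) (avg_nonneg hg0 Q) hp (hlt Q hQ)
  have hsum : 0 ≤ ∑ Q ∈ S, Q.vol := Finset.sum_nonneg fun Q _ => (vol_pos Q).le
  rw [le_div_iff₀ hK]
  nlinarith

end DyadicCube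

theorem stmt15_general {r : ℕ} {E : Type*} [Fintype E] (hE : Nonempty E)
    (d : E → ℝ) (hd : ∀ e, 1 ≤ d e)
    (F : E → (Fin r → ℝ) → ℝ)
    (hFpos : ∀ e x, 0 ≤ F e x) (Q0 : DyadicCube r)
    (hFint : ∀ e, IntegrableOn (fun x => F e x ^ d e) Q0.toSet) :
    let M : ℝ := Real.logb 2 (2 * Fintype.card E) /
      (Finset.univ.inf' (Finset.univ_nonempty_iff.mpr hE) fun e => d e)
    let avg : E → DyadicCube r → ℝ := fun e Q =>
      (Q.vol⁻¹ * ∫ x in Q.toSet, F e x ^ d e) ^ (d e)⁻¹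
    let I : E → Set (DyadicCube r) := fun e =>
      {Q | Q.sub Q0 ∧ (2 : ℝ) ^ M * avg e Q0 < avg e Q}
    let Mx : Set (DyadicCube r) :=
      {Q | (∃ e, Q ∈ I e) ∧ ∀ Q', (∃ e, Q' ∈ I e) → Q.sub Q' → Q = Q'}
    (∀ e, ∀ S : Finset (DyadicCube r), (∀ Q ∈ S, Q ∈ Mx ∧ Q ∈ I e) →
        ∑ Q ∈ S, Q.vol ≤ Q0.vol / (2 * Fintype.card E))
    ∧ (∀ S : Finset (DyadicCube r), (∀ Q ∈ S, Q ∈ Mx) →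
        ∑ Q ∈ S, Q.vol ≤ Q0.vol / 2) := by
  intro M avg I Mx
  classical
  have hcard : (1 : ℝ) ≤ 2 * Fintype.card E := by
    have : (1 : ℝ) ≤ Fintype.card E := by exact_mod_cast Fintype.card_pos
    linarith
  have hmaximal (Q : DyadicCube r) (hQ : Q ∈ Mx) : Q.IsMaximalIn {Q | ∃ e, Q ∈ I e} := hQ
  have hone_e : ∀ e, ∀ S : Finset (DyadicCube r), (∀ Q ∈ S, Q ∈ Mx ∧ Q ∈ I e) →
      ∑ Q ∈ S, Q.vol ≤ Q0.vol / (2 * Fintype.card E) := by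
    intro e S hS
    have hc : 2 * (Fintype.card E : ℝ) ≤ ((2 : ℝ) ^ M) ^ d e := by
      rw [← Real.rpow_mul zero_le_two]
      exact Real.le_rpow_logb_div_mul one_lt_two hcard
        (one_pos.trans_le (Finset.le_inf' _ _ fun e _ => hd e))
        (Finset.inf'_le _ (Finset.mem_univ e))
    exact DyadicCube.sum_vol_le_div_of_mul_rpow_avg_lt (hFint e)
      (fun x => Real.rpow_nonneg (hFpos e x) _) (fun Q hQ => (hS Q hQ).2.1)
      (DyadicCube.pairwiseDisjoint_of_isMaximalIn fun Q hQ => hmaximal Q (hS Q hQ).1)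
      (one_pos.trans_le (hd e)) (by positivity) (by positivity) hc fun Q hQ => (hS Q hQ).2.2
  refine ⟨hone_e, fun S hS => ?_⟩
  calc ∑ Q ∈ S, Q.vol ≤ ∑ e, ∑ Q ∈ S with Q ∈ I e, Q.vol :=
        Finset.sum_le_sum_sum_filter_of_cover (fun Q _ => (DyadicCube.vol_pos Q).le)
          fun Q hQ => by simpa using (hS Q hQ).1
    _ ≤ ∑ _e : E, Q0.vol / (2 * Fintype.card E) := Finset.sum_le_sum fun e _ =>
        hone_e e _ fun Q hQ => ⟨hS Q (Finset.mem_filter.mp hQ).1, (Finset.mem_filter.mp hQ).2⟩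
    _ = Q0.vol / 2 := by
        rw [Finset.sum_const, Finset.card_univ, nsmul_eq_mul]
        field_simp

/-- Stopping-time bound: with `M = log₂(2|E|)/min_e d_e`, `ℐ_{Q_0}^e` the dyadic subcubes
`Q ⊆ Q_0` with `[F_e^{d_e}]_Q^{1/d_e} > 2^M [F_e^{d_e}]_{Q_0}^{1/d_e}`, and `ℳ_{Q_0}` the
maximal cubes of `⋃_e ℐ_{Q_0}^e`, one has `∑_{Q ∈ ℳ_{Q_0} ∩ ℐ_{Q_0}^e} |Q| ≤ |Q_0|/(2|E|)`
for each `e`, and `∑_{Q ∈ ℳ_{Q_0}} |Q| ≤ |Q_0|/2` (tested on finite subfamilies). -/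
theorem stmt15 {r : ℕ} (hr : 0 < r) {E : Type*} [Fintype E] (hE : Nonempty E)
    (d : E → ℝ) (hd : ∀ e, 1 ≤ d e)
    (F : E → (Fin r → ℝ) → ℝ) (hFmeas : ∀ e, Measurable (F e))
    (hFpos : ∀ e x, 0 ≤ F e x) (Q0 : DyadicCube r)
    (hFint : ∀ e, IntegrableOn (fun x => F e x ^ d e) Q0.toSet) :
    let M : ℝ := Real.logb 2 (2 * Fintype.card E) /
      (Finset.univ.inf' (Finset.univ_nonempty_iff.mpr hE) fun e => d e)
    let avg : E → DyadicCube r → ℝ := fun e Q =>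
      (Q.vol⁻¹ * ∫ x in Q.toSet, F e x ^ d e) ^ (d e)⁻¹
    let I : E → Set (DyadicCube r) := fun e =>
      {Q | Q.sub Q0 ∧ (2 : ℝ) ^ M * avg e Q0 < avg e Q}
    let Mx : Set (DyadicCube r) :=
      {Q | (∃ e, Q ∈ I e) ∧ ∀ Q', (∃ e, Q' ∈ I e) → Q.sub Q' → Q = Q'}
    (∀ e, ∀ S : Finset (DyadicCube r), (∀ Q ∈ S, Q ∈ Mx ∧ Q ∈ I e) →
        ∑ Q ∈ S, Q.vol ≤ Q0.vol / (2 * Fintype.card E))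
    ∧ (∀ S : Finset (DyadicCube r), (∀ Q ∈ S, Q ∈ Mx) →
        ∑ Q ∈ S, Q.vol ≤ Q0.vol / 2) :=
  stmt15_general hE d hd F hFpos Q0 hFint
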